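/- Let γ > 0 and F₀ > 0. Define g : (0,∞) → ℝ by g(t) = t⁴·F₀ if t⁴·F₀ ≤ γ²/4, and g(t) = γ·t²·√F₀ − γ²/4 otherwise. Then g is differentiable on (0,∞) and the map t ↦ g'(t)/t is nondecreasing on (0,∞). -/

import Mathlib

/-- The truncated nonlinearity along the ray `t ↦ (t·s₀, t·t₀)`, where
`F₀ = F(s₀,t₀)`: `g(t) = t⁴F₀` if `t⁴F₀ ≤ γ²/4`, and
`g(t) = γ t² √F₀ − γ²/4` otherwise. -/
noncomputable def g (γ F₀ t : ℝ) : ℝ :=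
  if t ^ 4 * F₀ ≤ γ ^ 2 / 4 then t ^ 4 * F₀
  else γ * t ^ 2 * Real.sqrt F₀ - γ ^ 2 / 4

/-!
Put `a = t² √F₀`. Then `g(t) = φ(a)` with `φ = quadCap (γ/2)`: the parabola `a²` up to `γ/2`,
continued past `γ/2` along its tangent line. Hence `φ` is differentiable with
`φ'(a) = 2 min(a, γ/2)`, and the chain rule gives `g'(t)/t = 4 √F₀ min(t² √F₀, γ/2)`, which is nondecreasing in `t > 0`.
-/

open Set

noncomputable def quadCap (c a : ℝ) : ℝ :=
  if a ≤ c then a ^ 2 else 2 * c * a - c ^ 2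

section quadCap

variable (c a : ℝ)

theorem hasDerivWithinAt_quadCap_Iic : HasDerivWithinAt (quadCap c) (2 * min a c) (Iic c) a := by
  by_cases ha : a ≤ c
  · have hsq : HasDerivAt (fun b : ℝ => b ^ 2) (2 * a) a := by simpa using hasDerivAt_pow 2 a
    rw [min_eq_left ha]
    exact hsq.hasDerivWithinAt.congr_of_mem (fun b hb => if_pos (mem_Iic.mp hb)) ha
  · exact HasFDerivWithinAt.of_notMem_closure (by rwa [closure_Iic, mem_Iic])

theorem hasDerivWithinAt_quadCap_Ici : HasDerivWithinAt (quadCap c) (2 * min a c) (Ici c) a := by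
  by_cases ha : c ≤ a
  · have hlin : HasDerivAt (fun b => 2 * c * b - c ^ 2) (2 * c) a := by
      simpa using ((hasDerivAt_id a).const_mul (2 * c)).sub_const (c ^ 2)
    have heq : EqOn (quadCap c) (fun b => 2 * c * b - c ^ 2) (Ici c) := fun b hb => by
      rcases (mem_Ici.mp hb).eq_or_lt with rfl | hlt
      · rw [quadCap, if_pos le_rfl]; ring
      · exact if_neg (not_le.mpr hlt)
    rw [min_eq_right ha]
    exact hlin.hasDerivWithinAt.congr_of_mem heq ha
  · exact HasFDerivWithinAt.of_notMem_closure (by rwa [closure_Ici, mem_Ici])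

theorem hasDerivAt_quadCap : HasDerivAt (quadCap c) (2 * min a c) a := by
  simpa [Iic_union_Ici] using
    (hasDerivWithinAt_quadCap_Iic c a).union (hasDerivWithinAt_quadCap_Ici c a)

end quadCap

theorem g_eq_quadCap {γ F₀ : ℝ} (hγ : 0 ≤ γ) (hF₀ : 0 ≤ F₀) (t : ℝ) :
    g γ F₀ t = quadCap (γ / 2) (t ^ 2 * √F₀) := by
  have hsq : (t ^ 2 * √F₀) ^ 2 = t ^ 4 * F₀ := by
    rw [mul_pow, Real.sq_sqrt hF₀]; ring
  have hcmp : t ^ 4 * F₀ ≤ γ ^ 2 / 4 ↔ t ^ 2 * √F₀ ≤ γ / 2 := by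
    rw [← hsq, show γ ^ 2 / 4 = (γ / 2) ^ 2 by ring]
    exact pow_le_pow_iff_left₀ (by positivity) (by positivity) two_ne_zero
  simp only [g, quadCap, hcmp, hsq]
  split_ifs <;> ring

theorem stmt_7 (γ F₀ : ℝ) (hγ : 0 < γ) (hF₀ : 0 < F₀) :
    (∀ t ∈ Set.Ioi (0 : ℝ), DifferentiableAt ℝ (g γ F₀) t) ∧
    MonotoneOn (fun t => deriv (g γ F₀) t / t) (Set.Ioi (0 : ℝ)) := by
  have hg : g γ F₀ = fun t => quadCap (γ / 2) (t ^ 2 * √F₀) :=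
    funext (g_eq_quadCap hγ.le hF₀.le)
  have hderiv (t : ℝ) :
      HasDerivAt (g γ F₀) (2 * min (t ^ 2 * √F₀) (γ / 2) * (2 * t * √F₀)) t := by
    rw [hg]
    refine (hasDerivAt_quadCap _ _).comp t ?_
    simpa using (hasDerivAt_pow 2 t).mul_const √F₀
  have hquot (t : ℝ) (ht : t ≠ 0) :
      deriv (g γ F₀) t / t = 4 * √F₀ * min (t ^ 2 * √F₀) (γ / 2) := by
    rw [(hderiv t).deriv]
    field_simp
    ring
  refine ⟨fun t _ => (hderiv t).differentiableAt, fun x hx y hy hxy => ?_⟩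
  simp only [hquot x (ne_of_gt hx), hquot y (ne_of_gt hy)]
  have hx0 : 0 < x := hx
  gcongr
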